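/- Let G be a finite group. The functor −×_G−: Fin_G × ^G Fin → Fin, sending (S, Y) to S ×_G Y = (S × Y)/~ with ~ generated by (sg, y) ~ (s, gy), is a perfect pairing: it preserves pullbacks, finite coproducts, and epimorphisms separately in each variable, and the two induced functors Fin_G → Fun_pce(^G Fin, Fin) and ^G Fin → Fun_pce(Fin_G, Fin) are both equivalences of categories. -/

import Mathlib

open CategoryTheory CategoryTheory.Limits MulOpposite

namespace Paper

/-- A functor preserves pullbacks, finite coproducts, and epimorphisms. -/
def PreservesPCE {C : Type*} {D : Type*} [Category C] [Category D] (F : C ⥤ D) : Prop :=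
  Nonempty (PreservesLimitsOfShape WalkingCospan F) ∧
  (∀ (J : Type) [Finite J], Nonempty (PreservesColimitsOfShape (Discrete J) F)) ∧
  F.PreservesEpimorphisms

/-- `Fun_pce C D`: the full subcategory of the functor category spanned by the functors
preserving pullbacks, finite coproducts and epimorphisms. -/
abbrev FunPCE (C : Type*) (D : Type*) [Category C] [Category D] :=
  ObjectProperty.FullSubcategory (fun F : C ⥤ D => PreservesPCE F)

/-- Finite sets with an action of the monoid `M`. -/
abbrev ActCat (M : Type) [Monoid M] := Action FintypeCat.{0} (MonCat.of M)

/-- `Fin_G`: finite right `G`-sets (encoded as left `Gᵐᵒᵖ`-actions). -/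
abbrev FinRight (G : Type) [Group G] := ActCat Gᵐᵒᵖ

/-- `^G Fin`: the category of finite *free* left `G`-sets. -/
abbrev FinFreeL (G : Type) [Group G] :=
  ObjectProperty.FullSubcategory (fun X : ActCat G => ∀ (g : G) (x : X.V), (X.ρ g).hom x = x → g = 1)

/-- Finite `(G,H)`-bisets: a left `G`-action and a commuting right `H`-action. -/
abbrev BiAct (G H : Type) [Group G] [Group H] := ActCat (G × Hᵐᵒᵖ)

/-- The left `G`-action of a `(G,H)`-biset is free. -/
def LeftFree {G H : Type} [Group G] [Group H] (X : BiAct G H) : Prop :=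
  ∀ (g : G) (x : X.V), (X.ρ (g, 1)).hom x = x → g = 1

/-- `^G Fin_H`: finite `(G,H)`-bisets whose left `G`-action is free. -/
abbrev BiFin (G H : Type) [Group G] [Group H] :=
  ObjectProperty.FullSubcategory (fun X : BiAct G H => LeftFree X)

/-- The separable `(G,H)`-biset `G × T` attached to a finite right `H`-set `T`,
with actions `g • (g', t) • h = (g * g', t • h)`. -/
noncomputable def sepBiset (G H : Type) [Group G] [Group H] [Fintype G]
    (T : ActCat Hᵐᵒᵖ) : BiAct G H where
  V := FintypeCat.of (G × T.V)
  ρ :=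
    { toFun := fun m => FintypeCat.homMk (fun p => (m.1 * p.1, (T.ρ m.2).hom p.2))
      map_one' := by
        apply FintypeCat.hom_ext; intro p
        show ((1 : G) * p.1, (T.ρ 1).hom p.2) = p
        simp
      map_mul' := by
        intro a b
        apply FintypeCat.hom_ext; intro p
        show ((a.1 * b.1) * p.1, (T.ρ (a.2 * b.2)).hom p.2)
          = (a.1 * (b.1 * p.1), (T.ρ a.2).hom ((T.ρ b.2).hom p.2))
        rw [mul_assoc, map_mul]
        rfl }

/-- A `(G,H)`-biset is separable if it is isomorphic to `G × T`
for some finite right `H`-set `T`. -/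
def Separable (G H : Type) [Group G] [Group H] [Fintype G] (X : BiAct G H) : Prop :=
  ∃ T : ActCat Hᵐᵒᵖ, Nonempty (X ≅ sepBiset G H T)

/-- `(^G Fin_H)^sep`: the full subcategory of separable bisets. -/
abbrev SepCat (G H : Type) [Group G] [Group H] [Fintype G] :=
  ObjectProperty.FullSubcategory (fun X : BiFin G H => Separable G H X.obj)

variable {G H : Type} [Group G] [Group H]

/-- The relation generating `X ×_{(H,G)} Y`: `(x·g, y) ~ (x, g·y)` and `(h·x, y) ~ (x, y·h)`. -/
def pairRel (X : BiAct H G) (Y : BiAct G H) : X.V × Y.V → X.V × Y.V → Prop :=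
  fun p q =>
    (∃ g : G, p.1 = (X.ρ (1, op g)).hom q.1 ∧ q.2 = (Y.ρ (g, 1)).hom p.2) ∨
    (∃ h : H, q.1 = (X.ρ (h, 1)).hom p.1 ∧ p.2 = (Y.ρ (1, op h)).hom q.2)

/-- `X ×_{(H,G)} Y`: the quotient of `X × Y` by the equivalence relation generated by
`(x·g, y) ~ (x, g·y)` and `(h·x, y) ~ (x, y·h)`. -/
def PairSet (X : BiAct H G) (Y : BiAct G H) : Type := Quot (pairRel X Y)

instance (X : BiAct H G) (Y : BiAct G H) : Finite (PairSet X Y) :=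
  Quot.finite _

/-- `X ×_{(H,G)} Y` as an object of the category of finite sets. -/
noncomputable def pairObj (X : BiAct H G) (Y : BiAct G H) : FintypeCat :=
  letI := Fintype.ofFinite (PairSet X Y)
  FintypeCat.of (PairSet X Y)

/-- Functoriality of `X ×_{(H,G)} Y` in `X`. -/
noncomputable def pairMapFst {X X' : BiAct H G} (f : X ⟶ X') (Y : BiAct G H) :
    pairObj X Y ⟶ pairObj X' Y :=
  FintypeCat.homMk <| Quot.map (fun p => (f.hom p.1, p.2)) (by
    rintro ⟨x, y⟩ ⟨x', y'⟩ (⟨g, h1, h2⟩ | ⟨h, h1, h2⟩)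
    · left
      refine ⟨g, ?_, h2⟩
      have := ConcreteCategory.congr_hom (f.comm (1, op g)) x'
      simp only [FintypeCat.comp_apply] at this
      dsimp only at h1 ⊢
      rw [h1]; exact this
    · right
      refine ⟨h, ?_, h2⟩
      have := ConcreteCategory.congr_hom (f.comm (h, 1)) x
      simp only [FintypeCat.comp_apply] at this
      dsimp only at h1 ⊢
      rw [h1]; exact this)

/-- Functoriality of `X ×_{(H,G)} Y` in `Y`. -/
noncomputable def pairMapSnd (X : BiAct H G) {Y Y' : BiAct G H} (f : Y ⟶ Y') :
    pairObj X Y ⟶ pairObj X Y' :=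
  FintypeCat.homMk <| Quot.map (fun p => (p.1, f.hom p.2)) (by
    rintro ⟨x, y⟩ ⟨x', y'⟩ (⟨g, h1, h2⟩ | ⟨h, h1, h2⟩)
    · left
      refine ⟨g, h1, ?_⟩
      have := ConcreteCategory.congr_hom (f.comm (g, 1)) y
      simp only [FintypeCat.comp_apply] at this
      dsimp only at h2 ⊢
      rw [h2]; exact this
    · right
      refine ⟨h, h1, ?_⟩
      have := ConcreteCategory.congr_hom (f.comm (1, op h)) y'
      simp only [FintypeCat.comp_apply] at this
      dsimp only at h2 ⊢
      rw [h2]; exact this)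

/-- For a fixed biset `X`, the functor `X ×_{(H,G)} -` on all of `^G Fin_H`. -/
noncomputable def pairFstFunctorRaw (X : BiAct H G) : BiAct G H ⥤ FintypeCat where
  obj Y := pairObj X Y
  map f := pairMapSnd X f
  map_id Y := by
    ext q
    induction q using Quot.ind
    rfl
  map_comp f g := by
    ext q
    induction q using Quot.ind
    rfl

/-- For a fixed biset `X` in `^H Fin_G`, the functor `X ×_{(H,G)} -` on `(^G Fin_H)^sep`. -/
noncomputable def pairFstFunctor (G H : Type) [Group G] [Group H] [Fintype G]
    (X : BiAct H G) : SepCat G H ⥤ FintypeCat :=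
  ObjectProperty.ι _ ⋙ ObjectProperty.ι _ ⋙ pairFstFunctorRaw X

/-- For a fixed biset `Y` in `^G Fin_H`, the functor `- ×_{(H,G)} Y` on `^H Fin_G`. -/
noncomputable def pairSndFunctor (G H : Type) [Group G] [Group H]
    (Y : BiAct G H) : BiFin H G ⥤ FintypeCat where
  obj X := pairObj X.obj Y
  map f := pairMapFst f.hom Y
  map_id X := by
    ext q
    induction q using Quot.ind
    rfl
  map_comp f g := by
    ext q
    induction q using Quot.ind
    rfl

variable (G H) [Fintype G] [Fintype H]

/-- The functor `(^G Fin_H)^sep ⟶ Fun_pce(^H Fin_G, Fin)` induced by the pairing. -/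
noncomputable def pairingPhi
    (h : ∀ Y : SepCat G H, PreservesPCE (pairSndFunctor G H Y.obj.obj)) :
    SepCat G H ⥤ FunPCE (BiFin H G) FintypeCat where
  obj Y := ⟨pairSndFunctor G H Y.obj.obj, h Y⟩
  map {Y Y'} f :=
    { hom :=
      { app := fun X => pairMapSnd X.obj f.hom.hom
        naturality := by
          intro X X' g
          ext q
          induction q using Quot.ind
          rfl } }
  map_id Y := by
    ext X q
    induction q using Quot.ind
    rfl
  map_comp f g := by
    ext X q
    induction q using Quot.ind
    rfl

/-- The functor `^H Fin_G ⟶ Fun_pce((^G Fin_H)^sep, Fin)` induced by the pairing. -/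
noncomputable def pairingPsi
    (h : ∀ X : BiFin H G, PreservesPCE (pairFstFunctor G H X.obj)) :
    BiFin H G ⥤ FunPCE (SepCat G H) FintypeCat where
  obj X := ⟨pairFstFunctor G H X.obj, h X⟩
  map {X X'} f :=
    { hom :=
      { app := fun Y => pairMapFst f.hom Y.obj.obj
        naturality := by
          intro Y Y' g
          ext q
          induction q using Quot.ind
          rfl } }
  map_id X := by
    ext Y q
    induction q using Quot.ind
    rfl
  map_comp f g := by
    ext Y q
    induction q using Quot.ind
    rfl

end Paper

namespace Paper

variable {G : Type} [Group G]

/-- The relation generating `S ×_G Y` for a right `G`-set `S` and a left `G`-set `Y`: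
`(s·g, y) ~ (s, g·y)`. -/
def gRel (S : ActCat Gᵐᵒᵖ) (Y : ActCat G) : S.V × Y.V → S.V × Y.V → Prop :=
  fun p q => ∃ g : G, p.1 = (S.ρ (op g)).hom q.1 ∧ q.2 = (Y.ρ g).hom p.2

/-- `S ×_G Y = (S × Y)/~`, with `~` generated by `(s·g, y) ~ (s, g·y)`. -/
def GPairSet (S : ActCat Gᵐᵒᵖ) (Y : ActCat G) : Type := Quot (gRel S Y)

instance (S : ActCat Gᵐᵒᵖ) (Y : ActCat G) : Finite (GPairSet S Y) :=
  Quot.finite _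

/-- `S ×_G Y` as an object of the category of finite sets. -/
noncomputable def gPairObj (S : ActCat Gᵐᵒᵖ) (Y : ActCat G) : FintypeCat :=
  letI := Fintype.ofFinite (GPairSet S Y)
  FintypeCat.of (GPairSet S Y)

/-- Functoriality of `S ×_G Y` in `S`. -/
noncomputable def gPairMapFst {S S' : ActCat Gᵐᵒᵖ} (f : S ⟶ S') (Y : ActCat G) :
    gPairObj S Y ⟶ gPairObj S' Y :=
  FintypeCat.homMk <| Quot.map (fun p => (f.hom p.1, p.2)) (by
    rintro ⟨s, y⟩ ⟨s', y'⟩ ⟨g, h1, h2⟩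
    refine ⟨g, ?_, h2⟩
    have := ConcreteCategory.congr_hom (f.comm (op g)) s'
    simp only [FintypeCat.comp_apply] at this
    dsimp only at h1 ⊢
    rw [h1]; exact this)

/-- Functoriality of `S ×_G Y` in `Y`. -/
noncomputable def gPairMapSnd (S : ActCat Gᵐᵒᵖ) {Y Y' : ActCat G} (f : Y ⟶ Y') :
    gPairObj S Y ⟶ gPairObj S Y' :=
  FintypeCat.homMk <| Quot.map (fun p => (p.1, f.hom p.2)) (by
    rintro ⟨s, y⟩ ⟨s', y'⟩ ⟨g, h1, h2⟩
    refine ⟨g, h1, ?_⟩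
    have := ConcreteCategory.congr_hom (f.comm g) y
    simp only [FintypeCat.comp_apply] at this
    dsimp only at h2 ⊢
    rw [h2]; exact this)

/-- For a fixed right `G`-set `S`, the functor `S ×_G - : ^G Fin → Fin`. -/
noncomputable def gPairFstFunctor (G : Type) [Group G] (S : ActCat Gᵐᵒᵖ) :
    FinFreeL G ⥤ FintypeCat where
  obj Y := gPairObj S Y.obj
  map f := gPairMapSnd S f.hom
  map_id Y := by
    ext q; induction q using Quot.ind; rfl
  map_comp f g := by
    ext q; induction q using Quot.ind; rfl

/-- For a fixed free left `G`-set `Y`, the functor `- ×_G Y : Fin_G → Fin`. -/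
noncomputable def gPairSndFunctor (G : Type) [Group G] (Y : ActCat G) :
    FinRight G ⥤ FintypeCat where
  obj S := gPairObj S Y
  map f := gPairMapFst f Y
  map_id S := by
    ext q; induction q using Quot.ind; rfl
  map_comp f g := by
    ext q; induction q using Quot.ind; rfl

/-- The functor `Fin_G ⟶ Fun_pce(^G Fin, Fin)` induced by the pairing `- ×_G -`. -/
noncomputable def gPairingFst (G : Type) [Group G]
    (h : ∀ S : FinRight G, PreservesPCE (gPairFstFunctor G S)) :
    FinRight G ⥤ FunPCE (FinFreeL G) FintypeCat where
  obj S := ⟨gPairFstFunctor G S, h S⟩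
  map {S S'} f :=
    { hom :=
      { app := fun Y => gPairMapFst f Y.obj
        naturality := by
          intro Y Y' g
          ext q; induction q using Quot.ind; rfl } }
  map_id S := by
    ext Y q; induction q using Quot.ind; rfl
  map_comp f g := by
    ext Y q; induction q using Quot.ind; rfl

/-- The functor `^G Fin ⟶ Fun_pce(Fin_G, Fin)` induced by the pairing `- ×_G -`. -/
noncomputable def gPairingSnd (G : Type) [Group G]
    (h : ∀ Y : FinFreeL G, PreservesPCE (gPairSndFunctor G Y.obj)) :
    FinFreeL G ⥤ FunPCE (FinRight G) FintypeCat where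
  obj Y := ⟨gPairSndFunctor G Y.obj, h Y⟩
  map {Y Y'} f :=
    { hom :=
      { app := fun S => gPairMapSnd S f.hom
        naturality := by
          intro S S' g
          ext q; induction q using Quot.ind; rfl } }
  map_id Y := by
    ext S q; induction q using Quot.ind; rfl
  map_comp f g := by
    ext S q; induction q using Quot.ind; rfl


/-
Both categories contain the regular object `G`, which corepresents the underlying set through
the orbit maps `a ↦ a • x`, and whose endomorphisms are the right multiplications. Every object
`X` is covered by the coproduct of one copy of `G` per point, and the pullback of the orbit maps
of two points `x, x'` is again a coproduct of copies of `G`, one for each `m` with `m • x' = x`.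
A functor `F` preserving pullbacks, finite coproducts and epimorphisms carries this cover and
these pullbacks to a cover and to pullbacks of finite sets, which identifies `F(X)` with the
tensor product of `X` with the `G`-set `F(G)`: this is essential surjectivity. Applied to the
one-point `G`-set, the same pullback shows that `G` acts freely on `F(G)`. Full faithfulness
follows by evaluating at the regular object, since `S ×_G G ≅ S` and `G ×_G Y ≅ Y`.
-/

end Paper

namespace CategoryTheory

universe u

variable {C : Type*} [Category C]

section Elementwise

variable (E : C ⥤ Type u)

section Pullback

variable {P X Y Z : C} {fst : P ⟶ X} {snd : P ⟶ Y} {f : X ⟶ Z} {g : Y ⟶ Z}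

lemma IsPullback.elementwise [PreservesLimit (cospan f g) E] (h : IsPullback fst snd f g) :
    (∀ a b, E.map fst a = E.map fst b → E.map snd a = E.map snd b → a = b) ∧
      ∀ x y, E.map f x = E.map g y → ∃ p, E.map fst p = x ∧ E.map snd p = y := by
  obtain ⟨-, hinj, hsurj⟩ := (Types.isPullback_iff _ _ _ _).1 (h.map E)
  exact ⟨fun a b h₁ h₂ => hinj a b ⟨h₁, h₂⟩, hsurj⟩

lemma IsPullback.of_elementwise [ReflectsLimit (cospan f g) E] (w : fst ≫ f = snd ≫ g)
    (hinj : ∀ a b, E.map fst a = E.map fst b → E.map snd a = E.map snd b → a = b)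
    (hsurj : ∀ x y, E.map f x = E.map g y → ∃ p, E.map fst p = x ∧ E.map snd p = y) :
    IsPullback fst snd f g :=
  IsPullback.of_map E w <| (Types.isPullback_iff _ _ _ _).2
    ⟨by rw [← E.map_comp, ← E.map_comp, w], fun a b h => hinj a b h.1 h.2, hsurj⟩

end Pullback

variable {J : Type*} {A : J → C}

lemma Cofan.bijective_of_isColimit [PreservesColimit (Discrete.functor A) E] {c : Cofan A}
    (hc : IsColimit c) : Function.Bijective fun p : Σ j, E.obj (A j) => E.map (c.inj p.1) p.2 :=
  (Cofan.nonempty_isColimit_iff_bijective_fromSigma _).1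
    ⟨isColimitCofanMkObjOfIsColimit E A c.inj hc⟩

noncomputable def Cofan.isColimitOfBijective [ReflectsColimit (Discrete.functor A) E]
    (c : Cofan A) (h : Function.Bijective fun p : Σ j, E.obj (A j) => E.map (c.inj p.1) p.2) :
    IsColimit c :=
  isColimitOfIsColimitCofanMkObj E A c.inj
    ((Cofan.nonempty_isColimit_iff_bijective_fromSigma _).2 h).some

end Elementwise

section Preservation

variable {D : Type*} [Category D] (F : C ⥤ D)

lemma preservesPullbacks_of_map_isPullback
    (h : ∀ {P X Y Z : C} {fst : P ⟶ X} {snd : P ⟶ Y} {f : X ⟶ Z} {g : Y ⟶ Z},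
      IsPullback fst snd f g → IsPullback (F.map fst) (F.map snd) (F.map f) (F.map g)) :
    PreservesLimitsOfShape WalkingCospan F where
  preservesLimit {K} :=
    have {X Y Z : C} (f : X ⟶ Z) (g : Y ⟶ Z) : PreservesLimit (cospan f g) F :=
      ⟨fun hc => (IsPullback.of_isLimit hc).preservesLimit_cospan_iff.2
        (h (IsPullback.of_isLimit hc)) |>.preserves hc⟩
    preservesLimit_of_iso_diagram F (diagramIsoCospan K).symm

lemma preservesColimitsOfShape_discrete_of_cofan (J : Type*)
    (c : ∀ A : J → C, Cofan A) (hc : ∀ A, IsColimit (c A))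
    (h : ∀ A, Nonempty (IsColimit (Cofan.mk _ fun j => F.map ((c A).inj j)))) :
    PreservesColimitsOfShape (Discrete J) F :=
  have (A : J → C) : PreservesColimit (Discrete.functor A) F :=
    preservesColimit_of_preserves_colimit_cocone (hc A)
      ((isColimitMapCoconeCofanMkEquiv F A _).symm (h A).some)
  preservesColimitsOfShape_of_discrete F

end Preservation

section FintypeValued

variable (F : C ⥤ FintypeCat.{u})

lemma exists_map_comp_eq_of_epi {ι : Type u} [Finite ι] [PreservesColimitsOfShape (Discrete ι) F]
    [F.PreservesEpimorphisms] {R X : C} {c : Cofan fun _ : ι => R} (hc : IsColimit c)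
    (p : c.pt ⟶ X) [hp : Epi p] (w : F.obj X) : ∃ i u, F.map (c.inj i ≫ p) u = w := by
  obtain ⟨z, rfl⟩ :=
    (ConcreteCategory.epi_iff_surjective_of_preservesPushout (F.map p)).1 inferInstance w
  obtain ⟨⟨i, u⟩, rfl⟩ :=
    (Cofan.bijective_of_isColimit FintypeCat.incl (isColimitCofanMkObjOfIsColimit F _ c.inj hc)).2 z
  exact ⟨i, u, by rw [F.map_comp]; rfl⟩

variable {D : Type u} [Finite D] [PreservesLimitsOfShape WalkingCospan F]
  [PreservesColimitsOfShape (Discrete D) F] {R X : C} {f g : R ⟶ X}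
  {c : Cofan fun _ : D => R} (hc : IsColimit c) {fst snd : c.pt ⟶ R}
  (h : IsPullback fst snd f g)
include hc h

lemma exists_map_comp_of_isPullback {u v : F.obj R} (huv : F.map f u = F.map g v) :
    ∃ d z, F.map (c.inj d ≫ fst) z = u ∧ F.map (c.inj d ≫ snd) z = v := by
  obtain ⟨p, rfl, rfl⟩ := ((h.map F).elementwise FintypeCat.incl).2 u v huv
  obtain ⟨⟨d, z⟩, rfl⟩ :=
    (Cofan.bijective_of_isColimit FintypeCat.incl (isColimitCofanMkObjOfIsColimit F _ c.inj hc)).2 p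
  exact ⟨d, z, by rw [F.map_comp]; rfl, by rw [F.map_comp]; rfl⟩

lemma eq_of_map_comp_of_isPullback {d d' : D} {z z' : F.obj R}
    (h₁ : F.map (c.inj d ≫ fst) z = F.map (c.inj d' ≫ fst) z')
    (h₂ : F.map (c.inj d ≫ snd) z = F.map (c.inj d' ≫ snd) z') : d = d' := by
  rw [F.map_comp, F.map_comp] at h₁ h₂
  exact congrArg Sigma.fst <|
    (Cofan.bijective_of_isColimit FintypeCat.incl (isColimitCofanMkObjOfIsColimit F _ c.inj hc)).1
      (a₁ := ⟨d, z⟩) (a₂ := ⟨d', z'⟩) (((h.map F).elementwise FintypeCat.incl).1 _ _ h₁ h₂)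

end FintypeValued

end CategoryTheory

instance MulOpposite.finite {α : Type*} [Finite α] : Finite αᵐᵒᵖ :=
  Finite.of_equiv α MulOpposite.opEquiv

namespace Paper

open scoped RightActions

section PreservesPCE

variable {C : Type*} [Category C] {F : C ⥤ FintypeCat.{0}} (hF : PreservesPCE F)
include hF

lemma PreservesPCE.preservesPullbacks : PreservesLimitsOfShape WalkingCospan F :=
  hF.1.some

lemma PreservesPCE.preservesCoproducts (J : Type) [Finite J] :
    PreservesColimitsOfShape (Discrete J) F :=
  (hF.2.1 J).some

lemma PreservesPCE.preservesEpimorphisms : F.PreservesEpimorphisms :=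
  hF.2.2

end PreservesPCE

section Actions

variable {M : Type} [Monoid M]

abbrev actElements (M : Type) [Monoid M] : ActCat M ⥤ Type :=
  Action.forget FintypeCat (MonCat.of M) ⋙ FintypeCat.incl

lemma ActCat.hom_smul {X Y : ActCat M} (f : X ⟶ Y) (m : M) (x : X.V) :
    f.hom (m • x) = m • f.hom x :=
  ConcreteCategory.congr_hom (f.comm m) x

def ActCat.homMk {X Y : ActCat M} (f : X.V → Y.V) (hf : ∀ (m : M) x, f (m • x) = m • f x) :
    X ⟶ Y where
  hom := FintypeCat.homMk f
  comm m := FintypeCat.hom_ext _ _ (hf m)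

lemma ActCat.hom_ext' {X Y : ActCat M} {f g : X ⟶ Y} (h : ∀ x, f.hom x = g.hom x) : f = g :=
  Action.hom_ext _ _ (FintypeCat.hom_ext _ _ h)

variable {J : Type} [Finite J] (A : J → ActCat M)

noncomputable def sigmaAct : ActCat M :=
  Action.FintypeCat.ofMulAction _ (FintypeCat.of (Σ j, (A j).V))

noncomputable def sigmaCofan : Cofan A :=
  Cofan.mk (sigmaAct A) fun j => ActCat.homMk (Sigma.mk j (β := fun j => (A j).V)) fun _ _ => rfl

noncomputable def sigmaCofanIsColimit : IsColimit (sigmaCofan A) :=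
  Cofan.isColimitOfBijective (actElements M) _ Function.bijective_id

end Actions

section Free

variable {M : Type} [Group M]

abbrev freeActions (M : Type) [Group M] : ObjectProperty (ActCat M) :=
  fun X => ∀ (g : M) (x : X.V), (X.ρ g).hom x = x → g = 1

lemma freeActions.of_hom {X Y : ActCat M} (f : X ⟶ Y) (hY : freeActions M Y) :
    freeActions M X := fun g x hx =>
  hY g (f.hom x) ((ActCat.hom_smul f g x).symm.trans (congrArg f.hom hx))

lemma freeActions.eq_of_smul_eq {X : ActCat M} (hX : freeActions M X) {g k : M} {x : X.V}
    (h : g • x = k • x) : g = k :=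
  inv_mul_eq_one.1 (hX _ x (show (g⁻¹ * k) • x = x by rw [mul_smul, ← h, inv_smul_smul]))

instance : (freeActions M).IsClosedUnderLimitsOfShape WalkingCospan :=
  ⟨fun _ ⟨h⟩ => freeActions.of_hom (h.π.app .left) (h.prop_diag_obj _)⟩

lemma freeActions_sigmaAct {J : Type} [Finite J] {A : J → ActCat M}
    (hA : ∀ j, freeActions M (A j)) : freeActions M (sigmaAct A) := fun g p hp =>
  hA p.1 g p.2 (eq_of_heq (Sigma.mk.inj_iff.1 hp).2)

variable {J : Type} [Finite J] (A : J → FinFreeL M)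

noncomputable def freeSigma : FinFreeL M :=
  ⟨sigmaAct fun j => (A j).obj, freeActions_sigmaAct fun j => (A j).property⟩

noncomputable def freeSigmaCofan : Cofan A :=
  Cofan.mk (freeSigma A) fun j => ObjectProperty.homMk ((sigmaCofan fun j => (A j).obj).inj j)

noncomputable def freeSigmaCofanIsColimit : IsColimit (freeSigmaCofan A) :=
  isColimitOfIsColimitCofanMkObj (ObjectProperty.ι _) A _ (sigmaCofanIsColimit _)

end Free

section Epi

variable {M : Type} [Group M]

/-- `f` is tested against `y ↦ (true, y)` and `y ↦ (y ∈ range f, y)`, which is equivariant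
because the range of `f` is stable under `M`. -/
lemma ActCat.surjective_of_cancel_sigmaAct {X Y : ActCat M} (f : X ⟶ Y)
    (h : ∀ u v : Y ⟶ sigmaAct fun _ : Bool => Y, f ≫ u = f ≫ v → u = v) :
    Function.Surjective f.hom := by
  classical
  have hrange (m : M) (y : Y.V) : m • y ∈ Set.range f.hom ↔ y ∈ Set.range f.hom :=
    ⟨fun ⟨x, hx⟩ => ⟨m⁻¹ • x, by rw [ActCat.hom_smul, hx, inv_smul_smul]⟩,
      fun ⟨x, hx⟩ => ⟨m • x, by rw [ActCat.hom_smul, hx]⟩⟩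
  let u : Y ⟶ sigmaAct fun _ : Bool => Y := ActCat.homMk (fun y => ⟨true, y⟩) fun _ _ => rfl
  let v : Y ⟶ sigmaAct fun _ : Bool => Y :=
    ActCat.homMk (fun y => ⟨decide (y ∈ Set.range f.hom), y⟩) fun m y => by
      simp only [hrange]; rfl
  have huv : f ≫ u = f ≫ v := ActCat.hom_ext' fun x =>
    show (⟨true, f.hom x⟩ : Σ _ : Bool, Y.V) = ⟨_, f.hom x⟩ by rw [decide_eq_true ⟨x, rfl⟩]
  intro y
  exact of_decide_eq_true
    (congrArg Sigma.fst (ConcreteCategory.congr_hom (congrArg Action.Hom.hom (h u v huv)) y)).symm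

lemma ActCat.surjective_of_epi {X Y : ActCat M} (f : X ⟶ Y) [Epi f] : Function.Surjective f.hom :=
  ActCat.surjective_of_cancel_sigmaAct f fun _ _ => (cancel_epi f).1

lemma FinFreeL.surjective_of_epi {X Y : FinFreeL M} (f : X ⟶ Y) [Epi f] :
    Function.Surjective f.hom.hom :=
  ActCat.surjective_of_cancel_sigmaAct f.hom fun u v huv =>
    congrArg InducedCategory.Hom.hom <|
      (cancel_epi f (g := ObjectProperty.homMk u (Y := freeSigma fun _ : Bool => Y))
        (h := ObjectProperty.homMk v)).1 (ObjectProperty.hom_ext _ huv)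

end Epi

section Regular

variable {M : Type} [Group M] [Finite M]

/-- For `M = Gᵐᵒᵖ` this is `G` as a right `G`-set. -/
abbrev regular (M : Type) [Group M] [Finite M] : ActCat M where
  V := FintypeCat.of M
  ρ := (Action.FintypeCat.ofMulAction M (FintypeCat.of M)).ρ

lemma freeActions_regular : freeActions M (regular M) := fun _ a h =>
  mul_right_cancel (h.trans (one_mul a).symm)

abbrev freeRegular (M : Type) [Group M] [Finite M] : FinFreeL M :=
  ⟨regular M, freeActions_regular⟩

noncomputable def orbitMap (X : ActCat M) (x : X.V) : regular M ⟶ X :=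
  ActCat.homMk (fun a : M => a • x) fun m a => mul_smul m a x

noncomputable def freeOrbitMap (Y : FinFreeL M) (y : Y.obj.V) : freeRegular M ⟶ Y :=
  ObjectProperty.homMk (orbitMap Y.obj y)

noncomputable def rightMul (m : M) : regular M ⟶ regular M :=
  ActCat.homMk (fun a : M => a * m) fun n a => mul_assoc n a m

lemma rightMul_one : rightMul (1 : M) = 𝟙 (regular M) :=
  ActCat.hom_ext' fun a => mul_one (a : M)

noncomputable def rightMulHom : Mᵐᵒᵖ →* End (regular M) where
  toFun m := rightMul m.unop
  map_one' := rightMul_one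
  map_mul' _ _ := ActCat.hom_ext' fun a => (mul_assoc (a : M) _ _).symm

noncomputable def freeRightMulHom : Mᵐᵒᵖ →* End (freeRegular M) :=
  ((ObjectProperty.fullyFaithfulι _).mulEquivEnd (freeRegular M)).symm.toMonoidHom.comp rightMulHom

lemma orbitMap_comp {X Y : ActCat M} (f : X ⟶ Y) (x : X.V) :
    orbitMap X x ≫ f = orbitMap Y (f.hom x) :=
  ActCat.hom_ext' fun a => ActCat.hom_smul f a x

lemma freeOrbitMap_comp {Y Y' : FinFreeL M} (f : Y ⟶ Y') (y : Y.obj.V) :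
    freeOrbitMap Y y ≫ f = freeOrbitMap Y' (f.hom.hom y) :=
  ObjectProperty.hom_ext _ (orbitMap_comp f.hom y)

lemma rightMul_comp_orbitMap (X : ActCat M) (m : M) (x : X.V) :
    rightMul m ≫ orbitMap X x = orbitMap X (m • x) :=
  ActCat.hom_ext' fun a => mul_smul a m x

lemma freeRightMulHom_comp_freeOrbitMap (Y : FinFreeL M) (m : M) (y : Y.obj.V) :
    freeRightMulHom (MulOpposite.op m) ≫ freeOrbitMap Y y = freeOrbitMap Y (m • y) :=
  ObjectProperty.hom_ext _ (rightMul_comp_orbitMap Y.obj m y)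

end Regular

section OrbitDecomposition

variable {M : Type} [Group M] [Finite M] {X : ActCat M}

abbrev OrbitPullbackIndex (x x' : X.V) : Type := {m : M // m • x' = x}

noncomputable def orbitPullbackFst (x x' : X.V) :
    sigmaAct (fun _ : OrbitPullbackIndex x x' => regular M) ⟶ regular M :=
  ActCat.homMk (fun p => p.2) fun _ _ => rfl

noncomputable def orbitPullbackSnd (x x' : X.V) :
    sigmaAct (fun _ : OrbitPullbackIndex x x' => regular M) ⟶ regular M :=
  ActCat.homMk (fun p => p.2 * p.1.1) fun m p => mul_assoc m p.2 p.1.1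

/-- The pullback of the orbit maps of `x` and `x'` is `∐_{m • x' = x} M`, the summand of `m`
mapping by `a ↦ (a, a * m)`. -/
lemma isPullback_orbitMap (x x' : X.V) :
    IsPullback (orbitPullbackFst x x') (orbitPullbackSnd x x') (orbitMap X x) (orbitMap X x') := by
  refine IsPullback.of_elementwise (actElements M) ?_ ?_ ?_
  · exact ActCat.hom_ext' fun ⟨⟨m, hm⟩, a⟩ => show a • x = (a * m) • x' by rw [mul_smul, hm]
  · rintro ⟨⟨m, hm⟩, a⟩ ⟨⟨m', hm'⟩, a'⟩ (rfl : a = a') (h : a * m = a * m')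
    obtain rfl := mul_left_cancel h
    rfl
  · intro (a : M) (b : M) (h : a • x = b • x')
    refine ⟨⟨⟨a⁻¹ * b, ?_⟩, a⟩, rfl, mul_inv_cancel_left a b⟩
    rw [mul_smul, ← h, inv_smul_smul]

lemma isPullback_freeOrbitMap (Y : FinFreeL M) (y y' : Y.obj.V) :
    IsPullback (P := freeSigma fun _ : OrbitPullbackIndex y y' => freeRegular M)
      (X := freeRegular M) (Y := freeRegular M)
      (ObjectProperty.homMk (orbitPullbackFst y y')) (ObjectProperty.homMk (orbitPullbackSnd y y'))
      (freeOrbitMap Y y) (freeOrbitMap Y y') :=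
  IsPullback.of_map (ObjectProperty.ι _) (ObjectProperty.hom_ext _ (isPullback_orbitMap y y').w)
    (isPullback_orbitMap y y')

lemma inj_comp_orbitPullbackFst {x x' : X.V} (d : OrbitPullbackIndex x x') :
    (sigmaCofan _).inj d ≫ orbitPullbackFst x x' = 𝟙 _ :=
  rfl

lemma inj_comp_orbitPullbackSnd {x x' : X.V} (d : OrbitPullbackIndex x x') :
    (sigmaCofan _).inj d ≫ orbitPullbackSnd x x' = rightMul d.1 :=
  rfl

noncomputable def orbitCover (X : ActCat M) : sigmaAct (fun _ : X.V => regular M) ⟶ X :=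
  ActCat.homMk (fun p => p.2 • p.1) fun m p => mul_smul m p.2 p.1

lemma epi_orbitCover (X : ActCat M) : Epi (orbitCover X) :=
  (actElements M).epi_of_epi_map <| (epi_iff_surjective _).2 fun (x : X.V) =>
    ⟨⟨x, (1 : M)⟩, one_smul M x⟩

lemma epi_freeOrbitCover (Y : FinFreeL M) :
    Epi (X := freeSigma fun _ : Y.obj.V => freeRegular M)
      (ObjectProperty.homMk (orbitCover Y.obj)) :=
  (ObjectProperty.ι _).epi_of_epi_map (epi_orbitCover Y.obj)

lemma inj_comp_orbitCover (x : X.V) : (sigmaCofan _).inj x ≫ orbitCover X = orbitMap X x :=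
  rfl

end OrbitDecomposition

section Reconstruction

variable {M : Type} [Group M] [Finite M]

section ActCat

variable {F : ActCat M ⥤ FintypeCat.{0}} (hF : PreservesPCE F)
include hF

lemma exists_map_orbitMap_eq (X : ActCat M) (w : F.obj X) :
    ∃ x u, F.map (orbitMap X x) u = w := by
  have := hF.preservesCoproducts X.V
  have := hF.preservesEpimorphisms
  simpa only [inj_comp_orbitCover] using
    exists_map_comp_eq_of_epi F (sigmaCofanIsColimit _) (orbitCover X) (hp := epi_orbitCover X) w

lemma exists_of_map_orbitMap_eq {X : ActCat M} {x x' : X.V} {u u' : F.obj (regular M)}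
    (h : F.map (orbitMap X x) u = F.map (orbitMap X x') u') :
    ∃ m : M, m • x' = x ∧ F.map (rightMul m) u = u' := by
  have := hF.preservesPullbacks
  have := hF.preservesCoproducts (OrbitPullbackIndex x x')
  obtain ⟨⟨m, hm⟩, z, rfl, rfl⟩ :=
    exists_map_comp_of_isPullback F (sigmaCofanIsColimit _) (isPullback_orbitMap x x') h
  refine ⟨m, hm, ?_⟩
  rw [inj_comp_orbitPullbackFst, inj_comp_orbitPullbackSnd, F.map_id]
  rfl

lemma eq_one_of_map_rightMul_eq {m : M} {u : F.obj (regular M)} (h : F.map (rightMul m) u = u) :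
    m = 1 := by
  have := hF.preservesPullbacks
  let x : (Action.trivial M (FintypeCat.of PUnit) : ActCat M).V := PUnit.unit
  have hx (g : M) : g • x = x := rfl
  have := hF.preservesCoproducts (OrbitPullbackIndex x x)
  have := eq_of_map_comp_of_isPullback F (sigmaCofanIsColimit _) (isPullback_orbitMap x x)
    (d := ⟨m, hx m⟩) (d' := ⟨1, hx 1⟩) (z := u) (z' := u)
    (by rw [inj_comp_orbitPullbackFst, inj_comp_orbitPullbackFst])
    (by rw [inj_comp_orbitPullbackSnd, inj_comp_orbitPullbackSnd, h, rightMul_one, F.map_id]; rfl)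
  exact congrArg Subtype.val this

end ActCat

section FinFreeL

variable {F : FinFreeL M ⥤ FintypeCat.{0}} (hF : PreservesPCE F)
include hF

lemma exists_map_freeOrbitMap_eq (Y : FinFreeL M) (w : F.obj Y) :
    ∃ y u, F.map (freeOrbitMap Y y) u = w := by
  have := hF.preservesCoproducts Y.obj.V
  have := hF.preservesEpimorphisms
  exact exists_map_comp_eq_of_epi F (freeSigmaCofanIsColimit _) _ (hp := epi_freeOrbitCover Y) w

lemma exists_of_map_freeOrbitMap_eq {Y : FinFreeL M} {y y' : Y.obj.V}
    {u u' : F.obj (freeRegular M)} (h : F.map (freeOrbitMap Y y) u = F.map (freeOrbitMap Y y') u') :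
    ∃ m : M, m • y' = y ∧ F.map (freeRightMulHom (MulOpposite.op m)) u = u' := by
  have := hF.preservesPullbacks
  have := hF.preservesCoproducts (OrbitPullbackIndex y y')
  obtain ⟨⟨m, hm⟩, z, rfl, rfl⟩ :=
    exists_map_comp_of_isPullback F (freeSigmaCofanIsColimit _) (isPullback_freeOrbitMap Y y y') h
  refine ⟨m, hm, ?_⟩
  rw [← FintypeCat.comp_apply, ← F.map_comp]
  rfl

end FinFreeL

end Reconstruction

section Pairing

variable {G : Type} [Group G]

lemma gRel_iff {S : ActCat Gᵐᵒᵖ} {Y : ActCat G} {p q : S.V × Y.V} :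
    gRel S Y p q ↔ ∃ g : G, p.1 = q.1 <• g ∧ q.2 = g • p.2 :=
  Iff.rfl

lemma gRel_equivalence (S : ActCat Gᵐᵒᵖ) (Y : ActCat G) : Equivalence (gRel S Y) where
  refl p := gRel_iff.2 ⟨1, (one_smul Gᵐᵒᵖ p.1).symm, (one_smul G p.2).symm⟩
  symm h := by
    obtain ⟨g, h₁, h₂⟩ := gRel_iff.1 h
    refine gRel_iff.2 ⟨g⁻¹, ?_, ?_⟩
    · rw [h₁, op_smul_op_smul, mul_inv_cancel, op_one, one_smul]
    · rw [h₂, inv_smul_smul]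
  trans h h' := by
    obtain ⟨g, h₁, h₂⟩ := gRel_iff.1 h
    obtain ⟨k, h₃, h₄⟩ := gRel_iff.1 h'
    exact gRel_iff.2 ⟨k * g, by rw [h₁, h₃, op_smul_op_smul], by rw [h₄, h₂, mul_smul]⟩

abbrev gmk {S : ActCat Gᵐᵒᵖ} {Y : ActCat G} (s : S.V) (y : Y.V) : gPairObj S Y :=
  Quot.mk _ (s, y)

lemma gmk_eq_gmk_iff {S : ActCat Gᵐᵒᵖ} {Y : ActCat G} {s s' : S.V} {y y' : Y.V} :
    gmk s y = gmk s' y' ↔ ∃ g : G, s = s' <• g ∧ y' = g • y :=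
  ⟨fun h => (gRel_equivalence S Y).eqvGen_iff.1 (Quot.eqvGen_exact h), fun h => Quot.sound h⟩

lemma gmk_op_smul {S : ActCat Gᵐᵒᵖ} {Y : ActCat G} (s : S.V) (g : G) (y : Y.V) :
    gmk (s <• g) y = gmk s (g • y) :=
  Quot.sound ⟨g, rfl, rfl⟩

end Pairing

section PairingPreservesPCE

variable {G : Type} [Group G]

lemma isPullback_gPairMapFst {Y : ActCat G} (hY : freeActions G Y) {P A B Z : FinRight G}
    {fst : P ⟶ A} {snd : P ⟶ B} {f : A ⟶ Z} {g : B ⟶ Z} (h : IsPullback fst snd f g) :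
    IsPullback (gPairMapFst fst Y) (gPairMapFst snd Y) (gPairMapFst f Y) (gPairMapFst g Y) := by
  obtain ⟨hinj, hsurj⟩ := h.elementwise (actElements _)
  refine IsPullback.of_elementwise FintypeCat.incl ?_ ?_ ?_
  · ext ⟨p, y⟩
    exact congrArg (gmk · y) (ConcreteCategory.congr_hom (congrArg Action.Hom.hom h.w) p)
  · rintro ⟨p, y⟩ ⟨p', y'⟩ h₁ h₂
    obtain ⟨k, hk, rfl⟩ := gmk_eq_gmk_iff.1 h₁
    obtain ⟨k', hk', hkk'⟩ := gmk_eq_gmk_iff.1 h₂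
    obtain rfl := hY.eq_of_smul_eq hkk'
    obtain rfl : p = p' <• k :=
      hinj _ _ (hk.trans (ActCat.hom_smul _ _ _).symm) (hk'.trans (ActCat.hom_smul _ _ _).symm)
    exact gmk_op_smul p' k y
  · rintro ⟨a, y⟩ ⟨b, y'⟩ h
    obtain ⟨k, hk, rfl⟩ := gmk_eq_gmk_iff.1 h
    obtain ⟨p, rfl, hp⟩ := hsurj a (b <• k) (hk.trans (ActCat.hom_smul _ _ _).symm)
    exact ⟨gmk p y, rfl, (congrArg (gmk · y) hp).trans (gmk_op_smul b k y)⟩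

lemma bijective_gPairMapFst_sigmaCofan (Y : ActCat G) {J : Type} [Finite J]
    (A : J → FinRight G) :
    Function.Bijective fun p : Σ j, gPairObj (A j) Y =>
      gPairMapFst ((sigmaCofan A).inj p.1) Y p.2 := by
  refine ⟨?_, ?_⟩
  · rintro ⟨j, ⟨s, y⟩⟩ ⟨j', ⟨s', y'⟩⟩ h
    obtain ⟨k, hk, rfl⟩ := gmk_eq_gmk_iff.1 h
    obtain ⟨rfl, hs⟩ := Sigma.mk.inj_iff.1 (show (⟨j, s⟩ : Σ j, (A j).V) = ⟨j', s' <• k⟩ from hk)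
    obtain rfl := eq_of_heq hs
    exact congrArg (Sigma.mk j) (gmk_op_smul s' k y)
  · rintro ⟨⟨j, s⟩, y⟩
    exact ⟨⟨j, gmk s y⟩, rfl⟩

lemma surjective_gPairMapFst {S S' : FinRight G} (f : S ⟶ S') [Epi f] (Y : ActCat G) :
    Function.Surjective (gPairMapFst f Y) := by
  rintro ⟨s', y⟩
  obtain ⟨s, rfl⟩ := ActCat.surjective_of_epi f s'
  exact ⟨gmk s y, rfl⟩

theorem preservesPCE_gPairSndFunctor (Y : FinFreeL G) : PreservesPCE (gPairSndFunctor G Y.obj) :=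
  ⟨⟨preservesPullbacks_of_map_isPullback _ (isPullback_gPairMapFst Y.property)⟩,
    fun J _ => ⟨preservesColimitsOfShape_discrete_of_cofan _ J _ sigmaCofanIsColimit fun A =>
      ⟨Cofan.isColimitOfBijective FintypeCat.incl _ (bijective_gPairMapFst_sigmaCofan Y.obj A)⟩⟩,
    ⟨fun f _ => ConcreteCategory.epi_of_surjective _ (surjective_gPairMapFst f Y.obj)⟩⟩

lemma isPullback_gPairMapSnd (S : FinRight G) {P A B Z : FinFreeL G}
    {fst : P ⟶ A} {snd : P ⟶ B} {f : A ⟶ Z} {g : B ⟶ Z} (h : IsPullback fst snd f g) :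
    IsPullback (gPairMapSnd S fst.hom) (gPairMapSnd S snd.hom) (gPairMapSnd S f.hom)
      (gPairMapSnd S g.hom) := by
  obtain ⟨hinj, hsurj⟩ := h.elementwise (ObjectProperty.ι _ ⋙ actElements G)
  have hw (p : P.obj.V) : f.hom.hom (fst.hom.hom p) = g.hom.hom (snd.hom.hom p) :=
    ConcreteCategory.congr_hom (congrArg (fun φ => φ.hom.hom) h.w) p
  refine IsPullback.of_elementwise FintypeCat.incl ?_ ?_ ?_
  · ext ⟨s, p⟩
    exact congrArg (gmk s ·) (hw p)
  · rintro ⟨s, p⟩ ⟨s', p'⟩ h₁ h₂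
    obtain ⟨k, rfl, hk⟩ := gmk_eq_gmk_iff.1 h₁
    obtain ⟨k', -, hk'⟩ := gmk_eq_gmk_iff.1 h₂
    -- `k` and `k'` agree on the common image of `p` in the free `G`-set `Z`
    obtain rfl : k = k' := by
      refine freeActions.eq_of_smul_eq Z.property (x := f.hom.hom (fst.hom.hom p)) ?_
      rw [← ActCat.hom_smul, ← hk, hw, hk', ActCat.hom_smul, hw]
    obtain rfl : p' = k • p :=
      hinj _ _ (hk.trans (ActCat.hom_smul _ _ _).symm) (hk'.trans (ActCat.hom_smul _ _ _).symm)
    exact gmk_op_smul s' k p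
  · rintro ⟨s, a⟩ ⟨s', b⟩ h
    obtain ⟨k, rfl, hk⟩ := gmk_eq_gmk_iff.1 h
    obtain ⟨p, hp, rfl⟩ := hsurj (k • a) b ((ActCat.hom_smul f.hom k a).trans hk.symm)
    exact ⟨gmk s' p, (congrArg (gmk s' ·) hp).trans (gmk_op_smul s' k a).symm, rfl⟩

lemma bijective_gPairMapSnd_freeSigmaCofan (S : FinRight G) {J : Type} [Finite J]
    (A : J → FinFreeL G) :
    Function.Bijective fun p : Σ j, gPairObj S (A j).obj =>
      gPairMapSnd S ((freeSigmaCofan A).inj p.1).hom p.2 := by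
  refine ⟨?_, ?_⟩
  · rintro ⟨j, ⟨s, y⟩⟩ ⟨j', ⟨s', y'⟩⟩ h
    obtain ⟨k, rfl, hk⟩ := gmk_eq_gmk_iff.1 h
    obtain ⟨rfl, hy⟩ :=
      Sigma.mk.inj_iff.1 (show (⟨j', y'⟩ : Σ j, (A j).obj.V) = ⟨j, k • y⟩ from hk)
    obtain rfl := eq_of_heq hy
    exact congrArg (Sigma.mk j') (gmk_op_smul s' k y)
  · rintro ⟨s, ⟨j, y⟩⟩
    exact ⟨⟨j, gmk s y⟩, rfl⟩

lemma surjective_gPairMapSnd (S : FinRight G) {Y Y' : FinFreeL G} (f : Y ⟶ Y') [Epi f] :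
    Function.Surjective (gPairMapSnd S f.hom) := by
  rintro ⟨s, y'⟩
  obtain ⟨y, rfl⟩ := FinFreeL.surjective_of_epi f y'
  exact ⟨gmk s y, rfl⟩

theorem preservesPCE_gPairFstFunctor (S : FinRight G) : PreservesPCE (gPairFstFunctor G S) :=
  ⟨⟨preservesPullbacks_of_map_isPullback _ (isPullback_gPairMapSnd S)⟩,
    fun J _ => ⟨preservesColimitsOfShape_discrete_of_cofan _ J _ freeSigmaCofanIsColimit fun A =>
      ⟨Cofan.isColimitOfBijective FintypeCat.incl _ (bijective_gPairMapSnd_freeSigmaCofan S A)⟩⟩,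
    ⟨fun f _ => ConcreteCategory.epi_of_surjective _ (surjective_gPairMapSnd S f)⟩⟩

end PairingPreservesPCE

section FullyFaithful

variable {G : Type} [Group G] [Finite G]

def gPairRightUnitor (S : FinRight G) : gPairObj S (regular G) → S.V :=
  Quot.lift (fun p => p.1 <• (p.2 : G)) fun p q h => by
    obtain ⟨g, h₁, h₂⟩ := gRel_iff.1 h
    rw [h₁, h₂, op_smul_op_smul]
    rfl

lemma gPairRightUnitor_gmk_one (S : FinRight G) (s : S.V) :
    gPairRightUnitor S (gmk s (1 : G)) = s :=
  one_smul Gᵐᵒᵖ s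

lemma gPairRightUnitor_rightMul (S : FinRight G) (g : G) (t : gPairObj S (regular G)) :
    gPairRightUnitor S (gPairMapSnd S (rightMul g) t) = gPairRightUnitor S t <• g := by
  induction t using Quot.ind with | _ p => exact op_smul_mul p.1 (p.2 : G) g

lemma gPairMapSnd_orbitMap (S : FinRight G) (Y : ActCat G) (y : Y.V)
    (t : gPairObj S (regular G)) :
    gPairMapSnd S (orbitMap Y y) t = gmk (gPairRightUnitor S t) y := by
  induction t using Quot.ind with | _ p => exact (gmk_op_smul p.1 (p.2 : G) y).symm

noncomputable def homOfGPairFstNatTrans {S S' : FinRight G}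
    (η : gPairFstFunctor G S ⟶ gPairFstFunctor G S') : S ⟶ S' :=
  ActCat.homMk (fun s => gPairRightUnitor S' (η.app (freeRegular G) (gmk s (1 : G)))) fun m s => by
    have hs : gmk (m • s) (1 : G) = gPairMapSnd S (rightMul m.unop) (gmk s (1 : G)) :=
      (gmk_op_smul (Y := regular G) s m.unop 1).trans
        (congrArg (gmk s) (show (m.unop * 1 : G) = 1 * m.unop by rw [mul_one, one_mul]))
    rw [hs]
    exact (congrArg _ (NatTrans.naturality_apply η (freeRightMulHom m) _)).trans
      (gPairRightUnitor_rightMul S' m.unop _)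

lemma app_gmk_eq_homOfGPairFstNatTrans {S S' : FinRight G}
    (η : gPairFstFunctor G S ⟶ gPairFstFunctor G S') (Y : FinFreeL G) (s : S.V) (y : Y.obj.V) :
    η.app Y (gmk s y) = gmk ((homOfGPairFstNatTrans η).hom s) y := by
  have hsy : gmk s y = gPairMapSnd S (orbitMap Y.obj y) (gmk s (1 : G)) := by
    rw [gPairMapSnd_orbitMap, gPairRightUnitor_gmk_one]
  rw [hsy]
  exact (NatTrans.naturality_apply η (freeOrbitMap Y y) _).trans (gPairMapSnd_orbitMap S' _ y _)

noncomputable def gPairingFstFullyFaithful :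
    (gPairingFst G preservesPCE_gPairFstFunctor).FullyFaithful where
  preimage η := homOfGPairFstNatTrans η.hom
  map_preimage η := by
    ext Y t
    induction t using Quot.ind with
    | _ p => exact (app_gmk_eq_homOfGPairFstNatTrans η.hom Y _ _).symm
  preimage_map f := ActCat.hom_ext' fun s => gPairRightUnitor_gmk_one _ (f.hom s)

def gPairLeftUnitor (Y : ActCat G) : gPairObj (regular Gᵐᵒᵖ) Y → Y.V :=
  Quot.lift (fun p => (p.1 : Gᵐᵒᵖ).unop • p.2) fun p q h => by
    obtain ⟨g, h₁, h₂⟩ := gRel_iff.1 h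
    rw [h₁, h₂, ← mul_smul]
    rfl

lemma gPairLeftUnitor_gmk_one (Y : ActCat G) (y : Y.V) :
    gPairLeftUnitor Y (gmk (1 : Gᵐᵒᵖ) y) = y :=
  one_smul G y

lemma gPairLeftUnitor_rightMul (Y : ActCat G) (m : Gᵐᵒᵖ) (t : gPairObj (regular Gᵐᵒᵖ) Y) :
    gPairLeftUnitor Y (gPairMapFst (rightMul m) Y t) = m.unop • gPairLeftUnitor Y t := by
  induction t using Quot.ind with | _ p => exact mul_smul m.unop (p.1 : Gᵐᵒᵖ).unop p.2

lemma gPairMapFst_orbitMap (S : FinRight G) (s : S.V) (Y : ActCat G)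
    (t : gPairObj (regular Gᵐᵒᵖ) Y) :
    gPairMapFst (orbitMap S s) Y t = gmk s (gPairLeftUnitor Y t) := by
  induction t using Quot.ind with | _ p => exact gmk_op_smul s (p.1 : Gᵐᵒᵖ).unop p.2

noncomputable def homOfGPairSndNatTrans {Y Y' : FinFreeL G}
    (η : gPairSndFunctor G Y.obj ⟶ gPairSndFunctor G Y'.obj) : Y ⟶ Y' :=
  ObjectProperty.homMk <|
    ActCat.homMk (fun y => gPairLeftUnitor Y'.obj (η.app (regular Gᵐᵒᵖ) (gmk (1 : Gᵐᵒᵖ) y)))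
    fun g y => by
      have hy :
          gmk (1 : Gᵐᵒᵖ) (g • y) = gPairMapFst (rightMul (MulOpposite.op g)) Y.obj (gmk 1 y) :=
        (gmk_op_smul (S := regular Gᵐᵒᵖ) 1 g y).symm.trans (congrArg (gmk · y)
          (show (MulOpposite.op g * 1 : Gᵐᵒᵖ) = 1 * MulOpposite.op g by rw [mul_one, one_mul]))
      rw [hy]
      exact (congrArg _ (NatTrans.naturality_apply η (rightMul (MulOpposite.op g)) _)).trans
        (gPairLeftUnitor_rightMul Y'.obj (MulOpposite.op g) _)

lemma app_gmk_eq_homOfGPairSndNatTrans {Y Y' : FinFreeL G}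
    (η : gPairSndFunctor G Y.obj ⟶ gPairSndFunctor G Y'.obj) (S : FinRight G) (s : S.V)
    (y : Y.obj.V) : η.app S (gmk s y) = gmk s ((homOfGPairSndNatTrans η).hom.hom y) := by
  have hsy : gmk s y = gPairMapFst (orbitMap S s) Y.obj (gmk (1 : Gᵐᵒᵖ) y) := by
    rw [gPairMapFst_orbitMap, gPairLeftUnitor_gmk_one]
  rw [hsy]
  exact (NatTrans.naturality_apply η (orbitMap S s) _).trans (gPairMapFst_orbitMap S s _ _)

noncomputable def gPairingSndFullyFaithful :
    (gPairingSnd G preservesPCE_gPairSndFunctor).FullyFaithful where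
  preimage η := homOfGPairSndNatTrans η.hom
  map_preimage η := by
    ext S t
    induction t using Quot.ind with
    | _ p => exact (app_gmk_eq_homOfGPairSndNatTrans η.hom S _ _).symm
  preimage_map f := ObjectProperty.hom_ext _ <|
    ActCat.hom_ext' fun y => gPairLeftUnitor_gmk_one _ (f.hom.hom y)

end FullyFaithful

lemma FunPCE.nonempty_iso_of_bijective {C : Type*} [Category C] {Φ Ψ : FunPCE C FintypeCat.{0}}
    (α : Φ.obj ⟶ Ψ.obj) (hα : ∀ X, Function.Bijective (α.app X)) : Nonempty (Φ ≅ Ψ) :=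
  have (X : C) : IsIso (α.app X) := (ConcreteCategory.isIso_iff_bijective _).2 (hα X)
  have : IsIso α := NatIso.isIso_of_isIso_app α
  ⟨ObjectProperty.isoMk _ (asIso α)⟩

section EssSurj

variable {G : Type} [Group G] [Finite G]

noncomputable def freeGSetOfFunctor (F : FinRight G ⥤ FintypeCat.{0}) (hF : PreservesPCE F) :
    FinFreeL G :=
  ⟨⟨F.obj (regular Gᵐᵒᵖ), (F.mapEnd _).comp (rightMulHom.comp (MulEquiv.opOp G).toMonoidHom)⟩,
    fun _ _ hu => (MulOpposite.op_eq_one_iff _).1 (eq_one_of_map_rightMul_eq hF hu)⟩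

lemma freeGSetOfFunctor_smul (F : FinRight G ⥤ FintypeCat.{0}) (hF : PreservesPCE F) (g : G)
    (u : (freeGSetOfFunctor F hF).obj.V) : g • u = F.map (rightMul (MulOpposite.op g)) u :=
  rfl

noncomputable def pairingSndComparison (F : FinRight G ⥤ FintypeCat.{0}) (hF : PreservesPCE F) :
    gPairSndFunctor G (freeGSetOfFunctor F hF).obj ⟶ F where
  app S := FintypeCat.homMk <| Quot.lift (fun p => F.map (orbitMap S p.1) p.2) fun p q h => by
    obtain ⟨g, h₁, h₂⟩ := gRel_iff.1 h
    dsimp only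
    rw [h₁, h₂, freeGSetOfFunctor_smul, ← rightMul_comp_orbitMap, F.map_comp]
    rfl
  naturality S S' f := by
    ext t
    induction t using Quot.ind with | _ p => ?_
    change F.map (orbitMap S' (f.hom p.1)) p.2 = F.map f (F.map (orbitMap S p.1) p.2)
    rw [← orbitMap_comp, F.map_comp]
    rfl

lemma bijective_pairingSndComparison_app (F : FinRight G ⥤ FintypeCat.{0}) (hF : PreservesPCE F)
    (S : FinRight G) : Function.Bijective ((pairingSndComparison F hF).app S) := by
  refine ⟨?_, fun w => ?_⟩
  · rintro ⟨s, u⟩ ⟨s', u'⟩ h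
    obtain ⟨m, hm, hu⟩ := exists_of_map_orbitMap_eq hF h
    exact gmk_eq_gmk_iff.2 ⟨m.unop, hm.symm, hu.symm⟩
  · obtain ⟨s, u, rfl⟩ := exists_map_orbitMap_eq hF S w
    exact ⟨gmk s u, rfl⟩

lemma gPairingSnd_essSurj : (gPairingSnd G preservesPCE_gPairSndFunctor).EssSurj :=
  ⟨fun ⟨F, hF⟩ => ⟨freeGSetOfFunctor F hF,
    FunPCE.nonempty_iso_of_bijective _ (bijective_pairingSndComparison_app F hF)⟩⟩

noncomputable def rightGSetOfFunctor (F : FinFreeL G ⥤ FintypeCat.{0}) : FinRight G :=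
  ⟨F.obj (freeRegular G), (F.mapEnd _).comp freeRightMulHom⟩

lemma rightGSetOfFunctor_op_smul (F : FinFreeL G ⥤ FintypeCat.{0}) (g : G)
    (u : (rightGSetOfFunctor F).V) : u <• g = F.map (freeRightMulHom (MulOpposite.op g)) u :=
  rfl

noncomputable def pairingFstComparison (F : FinFreeL G ⥤ FintypeCat.{0}) :
    gPairFstFunctor G (rightGSetOfFunctor F) ⟶ F where
  app Y := FintypeCat.homMk <| Quot.lift (fun p => F.map (freeOrbitMap Y p.2) p.1) fun p q h => by
    obtain ⟨g, h₁, h₂⟩ := gRel_iff.1 h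
    dsimp only
    rw [h₁, h₂, rightGSetOfFunctor_op_smul, ← freeRightMulHom_comp_freeOrbitMap, F.map_comp]
    rfl
  naturality Y Y' f := by
    ext t
    induction t using Quot.ind with | _ p => ?_
    change F.map (freeOrbitMap Y' (f.hom.hom p.2)) p.1 = F.map f (F.map (freeOrbitMap Y p.2) p.1)
    rw [← freeOrbitMap_comp, F.map_comp]
    rfl

lemma bijective_pairingFstComparison_app (F : FinFreeL G ⥤ FintypeCat.{0}) (hF : PreservesPCE F)
    (Y : FinFreeL G) : Function.Bijective ((pairingFstComparison F).app Y) := by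
  refine ⟨?_, fun w => ?_⟩
  · rintro ⟨u, y⟩ ⟨u', y'⟩ h
    obtain ⟨m, hm, hu⟩ := exists_of_map_freeOrbitMap_eq hF h
    exact (gmk_eq_gmk_iff.2 ⟨m, hu.symm, hm.symm⟩).symm
  · obtain ⟨y, u, rfl⟩ := exists_map_freeOrbitMap_eq hF Y w
    exact ⟨gmk u y, rfl⟩

lemma gPairingFst_essSurj : (gPairingFst G preservesPCE_gPairFstFunctor).EssSurj :=
  ⟨fun ⟨F, hF⟩ => ⟨rightGSetOfFunctor F,
    FunPCE.nonempty_iso_of_bijective _ (bijective_pairingFstComparison_app F hF)⟩⟩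

end EssSurj

/-- Corollary `PerfPairCor`. For a finite group `G`, the functor
`- ×_G - : Fin_G × ^G Fin → Fin` is a perfect pairing: it preserves pullbacks, finite
coproducts and epimorphisms separately in each variable, and the two induced functors
`Fin_G → Fun_pce(^G Fin, Fin)` and `^G Fin → Fun_pce(Fin_G, Fin)` are both equivalences. -/
theorem perfect_pairing_single (G : Type) [Group G] [Fintype G] :
    ∃ (h₁ : ∀ S : FinRight G, PreservesPCE (gPairFstFunctor G S))
      (h₂ : ∀ Y : FinFreeL G, PreservesPCE (gPairSndFunctor G Y.obj)),
      (gPairingFst G h₁).IsEquivalence ∧ (gPairingSnd G h₂).IsEquivalence :=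
  ⟨preservesPCE_gPairFstFunctor, preservesPCE_gPairSndFunctor,
    { faithful := gPairingFstFullyFaithful.faithful
      full := gPairingFstFullyFaithful.full
      essSurj := gPairingFst_essSurj },
    { faithful := gPairingSndFullyFaithful.faithful
      full := gPairingSndFullyFaithful.full
      essSurj := gPairingSnd_essSurj }⟩

end Paper
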